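/- For every s ∈ ℂ, on (𝔳 × 𝔷) ∖ {(0,0)} one has □ K_s = 2sq K_{s−1} + 4s(s−1) |Z|² K_{s−2}. -/

import Mathlib

open scoped InnerProductSpace

noncomputable section

/-- The left-invariant vector field on `N = 𝔳 × 𝔷` associated to `S ∈ 𝔳`:
`(Sf)(X,Z) = ∂_𝔳 f(X,Z)[S] - ½ ∂_𝔷 f(X,Z)[[S,X]]`. -/
def vfV {V W : Type*} [NormedAddCommGroup V] [InnerProductSpace ℝ V]
    [NormedAddCommGroup W] [InnerProductSpace ℝ W]
    (br : V →ₗ[ℝ] V →ₗ[ℝ] W) (S : V) (f : V × W → ℂ) : V × W → ℂ :=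
  fun x => fderiv ℝ f x (S, 0) - (1/2 : ℂ) * fderiv ℝ f x (0, br S x.1)

/-- The left-invariant vector field associated to `T ∈ 𝔷`: `(Tf)(X,Z) = ∂_𝔷 f(X,Z)[T]`. -/
def vfW {V W : Type*} [NormedAddCommGroup V] [InnerProductSpace ℝ V]
    [NormedAddCommGroup W] [InnerProductSpace ℝ W]
    (T : W) (f : V × W → ℂ) : V × W → ℂ :=
  fun x => fderiv ℝ f x (0, T)

/-- Sub-Laplacian `∑_{j ∈ fs} S_j²` associated to a family of vectors in `𝔳`. -/
def subLap {V W : Type*} [NormedAddCommGroup V] [InnerProductSpace ℝ V]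
    [NormedAddCommGroup W] [InnerProductSpace ℝ W] {ι : Type*}
    (br : V →ₗ[ℝ] V →ₗ[ℝ] W) (fs : Finset ι) (S : ι → V) (f : V × W → ℂ) : V × W → ℂ :=
  fun x => ∑ j ∈ fs, vfV br (S j) (vfV br (S j) f) x

/-- Central Laplacian `∑_{j ∈ fs} T_j²` associated to a family of vectors in `𝔷`. -/
def boxLap {V W : Type*} [NormedAddCommGroup V] [InnerProductSpace ℝ V]
    [NormedAddCommGroup W] [InnerProductSpace ℝ W] {ι : Type*}
    (fs : Finset ι) (T : ι → W) (f : V × W → ℂ) : V × W → ℂ :=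
  fun x => ∑ j ∈ fs, vfW (T j) (vfW (T j) f) x

/-- The norm function `K(X,Z) = |X|⁴ + |Z|²`. -/
def Kfun {V W : Type*} [NormedAddCommGroup V] [NormedAddCommGroup W] (x : V × W) : ℝ :=
  ‖x.1‖^4 + ‖x.2‖^2

/-- The complex power `K_s = K^s`. -/
def Ks {V W : Type*} [NormedAddCommGroup V] [NormedAddCommGroup W] (s : ℂ) (x : V × W) : ℂ :=
  (Kfun x : ℂ) ^ s

/-- `ρ = (p+2q)/2` as a complex number. -/
def rhoC (p q : ℕ) : ℂ := ((p : ℂ) + 2*q)/2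

/-- `B(s) = 4s(4s+2ρ-2)`. -/
def Bc (p q : ℕ) (s : ℂ) : ℂ := 4*s*(4*s + 2*(rhoC p q) - 2)

/-- The component `X₂` of `X ∈ 𝔳` in `𝔳₂ = 𝔳₁ᗮ`. -/
def projPerp {V : Type*} [NormedAddCommGroup V] [InnerProductSpace ℝ V]
    [FiniteDimensional ℝ V] (V₁ : Submodule ℝ V) (X : V) : V :=
  (Submodule.orthogonalProjection V₁ᗮ X : V)


/-! The central Laplacian only differentiates in `Z`, and in that variable `K = |X|⁴ + |Z|²` is
`|Z|²` plus a constant. Hence `T K_s = 2s⟨T, Z⟩ K_{s-1}`; differentiating once more gives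
`2s|T|² K_{s-1} + 4s(s-1)⟨T, Z⟩² K_{s-2}`, and summing over an orthonormal basis of `𝔷` uses
`∑ |T_j|² = q` and `∑ ⟨T_j, Z⟩² = |Z|²`. -/

open Filter Topology

theorem Kfun_pos {V W : Type*} [NormedAddCommGroup V] [NormedAddCommGroup W] {x : V × W}
    (hx : x ≠ 0) : 0 < Kfun x := by
  obtain h | h : x.1 ≠ 0 ∨ x.2 ≠ 0 := by contrapose! hx; exact Prod.ext hx.1 hx.2
  · have := norm_pos_iff.2 h; unfold Kfun; positivity
  · have := norm_pos_iff.2 h; unfold Kfun; positivity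

theorem hasDerivAt_ofReal_cpow_const_of_pos {r : ℝ} (hr : 0 < r) (s : ℂ) :
    HasDerivAt (fun t : ℝ => (t : ℂ) ^ s) (s * (r : ℂ) ^ (s - 1)) r :=
  (Complex.hasStrictDerivAt_cpow_const (Complex.ofReal_mem_slitPlane.2 hr)).hasDerivAt
    |>.comp_ofReal

section
variable {V W : Type*} [NormedAddCommGroup V] [InnerProductSpace ℝ V]
    [NormedAddCommGroup W] [InnerProductSpace ℝ W]

theorem vfW_congr_of_eventuallyEq {f g : V × W → ℂ} {x : V × W} (h : f =ᶠ[𝓝 x] g) (t : W) :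
    vfW t f x = vfW t g x := by
  simp only [vfW, h.fderiv_eq]

theorem vfW_mul {f g : V × W → ℂ} {x : V × W} (hf : DifferentiableAt ℝ f x)
    (hg : DifferentiableAt ℝ g x) (t : W) :
    vfW t (fun y => f y * g y) x = f x * vfW t g x + g x * vfW t f x := by
  simp [vfW, fderiv_fun_mul hf hg]

theorem vfW_continuousLinearMap (L : V × W →L[ℝ] ℂ) (t : W) (x : V × W) :
    vfW t L x = L (0, t) := by
  simp [vfW, L.fderiv]

theorem hasFDerivAt_Kfun (x : V × W) :
    HasFDerivAt Kfun ((2 * ‖x.1‖ ^ 2) • 2 • (innerSL ℝ x.1).comp (ContinuousLinearMap.fst ℝ V W)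
      + 2 • (innerSL ℝ x.2).comp (ContinuousLinearMap.snd ℝ V W)) x := by
  have hK : (Kfun : V × W → ℝ) = fun y => (‖y.1‖ ^ 2) ^ 2 + ‖y.2‖ ^ 2 := by
    ext y; simp only [Kfun]; ring
  rw [hK]
  refine (((hasFDerivAt_fst (p := x)).norm_sq.pow 2).add
    (hasFDerivAt_snd (p := x)).norm_sq).congr_fderiv ?_
  ext v <;> simp

theorem hasFDerivAt_Ks {x : V × W} (hx : x ≠ 0) (s : ℂ) :
    HasFDerivAt (Ks s) ((fderiv ℝ Kfun x).smulRight (s * Kfun x ^ (s - 1))) x :=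
  (hasDerivAt_ofReal_cpow_const_of_pos (Kfun_pos hx) s).hasFDerivAt.comp x
    (hasFDerivAt_Kfun x).differentiableAt.hasFDerivAt

theorem vfW_Ks {x : V × W} (hx : x ≠ 0) (s : ℂ) (t : W) :
    vfW t (Ks s) x = 2 * s * ⟪t, x.2⟫_ℝ * Ks (s - 1) x := by
  simp only [vfW, (hasFDerivAt_Ks hx s).fderiv, (hasFDerivAt_Kfun x).fderiv,
    ContinuousLinearMap.smulRight_apply, add_apply, smul_apply, ContinuousLinearMap.comp_apply,
    ContinuousLinearMap.coe_fst', coe_innerSL_apply, inner_zero_right, smul_eq_mul,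
    mul_zero, ContinuousLinearMap.coe_snd', real_inner_comm, nsmul_eq_mul, Nat.cast_ofNat,
    zero_add, Complex.real_smul, Complex.ofReal_mul, Complex.ofReal_ofNat, Ks]
  ring

theorem vfW_vfW_Ks {x : V × W} (hx : x ≠ 0) (s : ℂ) (t : W) :
    vfW t (vfW t (Ks s)) x
      = 2 * s * ‖t‖ ^ 2 * Ks (s - 1) x + 4 * s * (s - 1) * ⟪t, x.2⟫_ℝ ^ 2 * Ks (s - 2) x := by
  set L : V × W →L[ℝ] ℂ :=
    (2 * s) • Complex.ofRealCLM.comp ((innerSL ℝ t).comp (ContinuousLinearMap.snd ℝ V W))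
  have hL : ∀ y, L y = 2 * s * ⟪t, y.2⟫_ℝ := by simp [L]
  have hfirst : vfW t (Ks s) =ᶠ[𝓝 x] fun y => L y * Ks (s - 1) y := by
    filter_upwards [isOpen_ne.mem_nhds hx] with y hy
    rw [vfW_Ks hy, hL]
  rw [vfW_congr_of_eventuallyEq hfirst,
    vfW_mul L.differentiableAt (hasFDerivAt_Ks hx _).differentiableAt, vfW_continuousLinearMap,
    vfW_Ks hx, hL, hL, real_inner_self_eq_norm_sq, show s - 1 - 1 = s - 2 by ring]
  push_cast
  ring

end

theorem boxKs_general {V W : Type*} [NormedAddCommGroup V] [InnerProductSpace ℝ V]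
    [NormedAddCommGroup W] [InnerProductSpace ℝ W]
    (q : ℕ)
    (T : OrthonormalBasis (Fin q) ℝ W)
    (s : ℂ) :
    ∀ x : V × W, x ≠ 0 →
      boxLap Finset.univ (fun j => T j) (Ks s) x
        = 2*s*(q : ℂ) * Ks (s-1) x + 4*s*(s-1) * (‖x.2‖ : ℂ)^2 * Ks (s-2) x := by
  intro x hx
  have hsum : ∑ j, (⟪T j, x.2⟫_ℝ : ℂ) ^ 2 = (‖x.2‖ : ℂ) ^ 2 := by
    exact_mod_cast T.sum_sq_inner_right x.2
  simp only [boxLap, vfW_vfW_Ks hx, T.norm_eq_one, Complex.ofReal_one, Finset.sum_add_distrib,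
    ← Finset.sum_mul, ← Finset.mul_sum, hsum, Finset.sum_const, Finset.card_univ,
    Fintype.card_fin, nsmul_eq_mul]
  ring

/-- `□ K_s = 2sq K_{s-1} + 4s(s-1) |Z|² K_{s-2}` on `(𝔳 × 𝔷) ∖ {(0,0)}`. -/
theorem boxKs {V W : Type*} [NormedAddCommGroup V] [InnerProductSpace ℝ V]
    [NormedAddCommGroup W] [InnerProductSpace ℝ W]
    [FiniteDimensional ℝ V] [FiniteDimensional ℝ W]
    (p q : ℕ) (hp : Module.finrank ℝ V = p) (hq : Module.finrank ℝ W = q)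
    (br : V →ₗ[ℝ] V →ₗ[ℝ] W) (hbr : ∀ X : V, br X X = 0)
    (J : W →ₗ[ℝ] V →ₗ[ℝ] V)
    (hJ : ∀ (z : W) (X Y : V), ⟪J z X, Y⟫_ℝ = ⟪z, br X Y⟫_ℝ)
    (hH : ∀ (z : W) (X : V), J z (J z X) = (-16 * ‖z‖^2) • X)
    (S : OrthonormalBasis (Fin p) ℝ V)
    (T : OrthonormalBasis (Fin q) ℝ W)
    (s : ℂ) :
    ∀ x : V × W, x ≠ 0 →
      boxLap Finset.univ (fun j => T j) (Ks s) x
        = 2*s*(q : ℂ) * Ks (s-1) x + 4*s*(s-1) * (‖x.2‖ : ℂ)^2 * Ks (s-2) x :=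
  boxKs_general q T s
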